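/- arXiv:2502.15191 — 5 statements merged into one kernel-verified Lean document; each statement's English description precedes it below -/
import Mathlib

section
/- Let R be a commutative ring, H a finite R-Hopf algebra, and S a left H-module algebra that is finitely generated projective and faithful over R, such that the smash product map j : S # H → End_R(S), j(s ⊗ h)(t) = s·h(t), is an isomorphism. Then for every left S # H-module M, the multiplication map S ⊗_R M^H → M is an isomorphism, where M^H = {m ∈ M : h·m = ε(h)m for all h ∈ H}. -/
open TensorProduct Coalgebra

variable (R H M : Type*)

/-- The `H`-invariants `M^H = {m ∈ M : h • m = ε(h) m for all h ∈ H}` of a module `M`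
over a Hopf algebra `H`, as an `R`-submodule. -/
def Hinvariants [CommRing R] [Ring H] [HopfAlgebra R H]
    [AddCommGroup M] [Module R M] [Module H M] [SMulCommClass H R M] :
    Submodule R M where
  carrier := {m | ∀ h : H, h • m = Coalgebra.counit (R := R) h • m}
  add_mem' := by
    intro a b ha hb h
    simp [smul_add, ha h, hb h]
  zero_mem' := by intro h; simp
  smul_mem' := by
    intro r m hm h
    rw [smul_comm, hm h, smul_comm]

/-- Let `R` be a commutative ring, `H` a finite projective `R`-Hopf
algebra and `S` a left `H`-module algebra, finitely generated projective and faithful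
over `R`, such that the smash product map `j : S # H → End_R(S)`, `j(s ⊗ h)(t) = s·(h•t)`,
is an isomorphism.  Then for every left `S # H`-module `M` (i.e. an `R`-module with
compatible `S`- and `H`-actions satisfying `h•(s•m) = Σ (h⁽¹⁾•s)•(h⁽²⁾•m)`), the
multiplication map `S ⊗_R M^H → M` is an isomorphism. -/
theorem smash_module_structure_theorem
    (S : Type*) [CommRing R] [Ring H] [HopfAlgebra R H]
    [Module.Finite R H] [Module.Projective R H]
    [Ring S] [Algebra R S] [Module.Finite R S] [Module.Projective R S] [FaithfulSMul R S]
    -- `S` is a left `H`-module algebra: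
    [Module H S] [IsScalarTower R H S] [SMulCommClass H R S]
    (hSalg : ∀ (h : H) (s t : S), h • (s * t) =
      ∑ i ∈ (ℛ R h).index, ((ℛ R h).left i • s) * ((ℛ R h).right i • t))
    (hSone : ∀ h : H, h • (1 : S) = Coalgebra.counit (R := R) h • (1 : S))
    -- `j : S # H → End_R S` is an isomorphism:
    (j : S ⊗[R] H →ₗ[R] Module.End R S)
    (hj : ∀ (s : S) (h : H) (t : S), j (s ⊗ₜ h) t = s * (h • t))
    (hjbij : Function.Bijective j)
    -- `M` is a left `S # H`-module:
    [AddCommGroup M] [Module R M] [Module S M] [Module H M]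
    [IsScalarTower R S M] [IsScalarTower R H M] [SMulCommClass H R M]
    (hM : ∀ (h : H) (s : S) (m : M), h • (s • m) =
      ∑ i ∈ (ℛ R h).index, ((ℛ R h).left i • s) • ((ℛ R h).right i • m))
    -- the multiplication map `S ⊗_R M^H → M`:
    (f : S ⊗[R] (Hinvariants R H M) →ₗ[R] M)
    (hf : ∀ (s : S) (m : Hinvariants R H M), f (s ⊗ₜ m) = s • (m : M)) :
    Function.Bijective f := by
  classical
  -- dual basis for S
  obtain ⟨n, p, q, -, -, hpq⟩ := Module.Finite.exists_comp_eq_id_of_projective R S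
  set u : Fin n → S := fun k => p (Pi.single k 1) with hu
  set φ : Fin n → (S →ₗ[R] R) := fun k => (LinearMap.proj k) ∘ₗ q with hφ
  have hdb : ∀ s : S, ∑ k, φ k s • u k = s := by
    intro s
    have h1 : (∑ k, q s k • (Pi.single k 1 : Fin n → R)) = q s := by
      ext l
      simp [Pi.single_apply]
    have h2 : ∑ k, φ k s • u k = p (∑ k, q s k • (Pi.single k 1 : Fin n → R)) := by
      rw [map_sum]
      simp [hu, hφ]
    rw [h2, h1]
    exact LinearMap.congr_fun hpq s
  -- counit identity
  have hcounit : ∀ k : H, ∑ i ∈ (ℛ R k).index,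
      counit (R := R) ((ℛ R k).right i) • (ℛ R k).left i = k := by
    intro k
    have h2 := congrArg (TensorProduct.rid R H) (Coalgebra.sum_tmul_counit_eq (ℛ R k))
    rw [map_sum] at h2
    simp only [TensorProduct.rid_tmul, one_smul] at h2
    exact h2
  -- smul endomorphisms
  let aS : H → Module.End R S := fun h =>
    { toFun := fun s => h • s, map_add' := smul_add h,
      map_smul' := fun r s => smul_comm h r s }
  let aM : H → Module.End R M := fun h =>
    { toFun := fun m => h • m, map_add' := smul_add h,
      map_smul' := fun r m => smul_comm h r m }
  let sM : S → Module.End R M := fun s =>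
    { toFun := fun m => s • m, map_add' := smul_add s,
      map_smul' := fun r m => smul_comm s r m }
  -- the action map S ⊗ H → End M
  let actM : S ⊗[R] H →ₗ[R] Module.End R M := TensorProduct.lift <| LinearMap.mk₂ R
    (fun s h => sM s ∘ₗ aM h)
    (by intro s s' h; ext m; simp [sM, add_smul])
    (by intro r s h; ext m; simp [sM, smul_assoc])
    (by intro s h h'; ext m; simp [aM, sM, add_smul, smul_add])
    (by intro r s h; ext m
        show s • ((r • h) • m) = r • (s • (h • m))
        rw [smul_assoc]; exact smul_comm s r _)
  have actM_tmul : ∀ (s : S) (h : H) (m : M), actM (s ⊗ₜ h) m = s • (h • m) := by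
    intro s h m; rfl
  -- twisting maps
  let Th : H → (S ⊗[R] H →ₗ[R] S ⊗[R] H) := fun h =>
    ∑ i ∈ (ℛ R h).index,
      TensorProduct.map (aS ((ℛ R h).left i)) (LinearMap.mulLeft R ((ℛ R h).right i))
  have jTh : ∀ (h : H) (x : S ⊗[R] H) (t : S), j (Th h x) t = h • (j x t) := by
    intro h x t
    induction x using TensorProduct.induction_on with
    | zero => simp
    | tmul s k =>
        simp only [Th, LinearMap.sum_apply, TensorProduct.map_tmul, map_sum,
          LinearMap.mulLeft_apply, hj, aS, LinearMap.coe_mk, AddHom.coe_mk]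
        rw [hSalg h s (k • t)]
        exact Finset.sum_congr rfl fun i _ => by rw [mul_smul]
    | add x y hx hy => simp [map_add, hx, hy]
  have actTh : ∀ (h : H) (x : S ⊗[R] H) (m : M), actM (Th h x) m = h • (actM x m) := by
    intro h x m
    induction x using TensorProduct.induction_on with
    | zero => simp
    | tmul s k =>
        simp only [Th, LinearMap.sum_apply, TensorProduct.map_tmul, map_sum,
          LinearMap.mulLeft_apply, actM_tmul, aS, LinearMap.coe_mk, AddHom.coe_mk]
        rw [hM h s (k • m)]
        exact Finset.sum_congr rfl fun i _ => by rw [mul_smul]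
    | add x y hx hy => simp [map_add, hx, hy]
  -- key invariance lemma
  have key_inv : ∀ (x : S ⊗[R] H),
      (∀ (t : S) (h : H), h • (j x t) = counit (R := R) h • (j x t)) →
      ∀ (h : H) (m : M), h • actM x m = counit (R := R) h • actM x m := by
    intro x hx h m
    have h1 : Th h x = counit (R := R) h • x := by
      apply hjbij.1
      ext t
      rw [jTh, hx t h, map_smul, LinearMap.smul_apply]
    rw [← actTh, h1, map_smul, LinearMap.smul_apply]
  -- left multiplication
  let Lu : S → (S ⊗[R] H →ₗ[R] S ⊗[R] H) := fun v =>
    TensorProduct.map (LinearMap.mulLeft R v) LinearMap.id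
  have jLu : ∀ (v : S) (x : S ⊗[R] H) (t : S), j (Lu v x) t = v * (j x t) := by
    intro v x t
    induction x using TensorProduct.induction_on with
    | zero => simp
    | tmul s k => simp [Lu, hj, mul_assoc]
    | add x y hx hy => simp [map_add, hx, hy, mul_add]
  have actLu : ∀ (v : S) (x : S ⊗[R] H) (m : M), actM (Lu v x) m = v • (actM x m) := by
    intro v x m
    induction x using TensorProduct.induction_on with
    | zero => simp
    | tmul s k => simp [Lu, actM_tmul, mul_smul]
    | add x y hx hy => simp [map_add, hx, hy, smul_add]
  -- the elements x k = j⁻¹ (t ↦ φ k t • 1)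
  let e := LinearEquiv.ofBijective j hjbij
  let x : Fin n → S ⊗[R] H := fun k => e.symm ((φ k).smulRight 1)
  have hjx : ∀ (k : Fin n) (t : S), j (x k) t = φ k t • 1 := by
    intro k t
    have : j (x k) = (φ k).smulRight 1 := e.apply_symm_apply _
    rw [this, LinearMap.smulRight_apply]
  -- membership of actM (x k) m in the invariants
  have hmem : ∀ (k : Fin n) (m : M), actM (x k) m ∈ Hinvariants R H M := by
    intro k m h
    apply key_inv
    intro t h'
    rw [hjx, smul_comm, hSone, smul_comm (counit (R := R) h')]
  -- the element 1 ⊗ 1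
  have one_elem : ∑ k, Lu (u k) (x k) = (1 : S) ⊗ₜ[R] (1 : H) := by
    apply hjbij.1
    ext t
    rw [map_sum, LinearMap.sum_apply]
    have : ∀ k : Fin n, j (Lu (u k) (x k)) t = φ k t • u k := by
      intro k
      rw [jLu, hjx, mul_smul_comm, mul_one]
    rw [Finset.sum_congr rfl fun k _ => this k, hdb, hj, one_smul, one_mul]
  -- invariance: scalars extend
  have A0 : ∀ (m₀ : M), m₀ ∈ Hinvariants R H M → ∀ (k : H) (s : S),
      k • (s • m₀) = (k • s) • m₀ := by
    intro m₀ hm k s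
    rw [hM k s m₀]
    have : ∀ i ∈ (ℛ R k).index, ((ℛ R k).left i • s) • ((ℛ R k).right i • m₀)
        = ((counit (R := R) ((ℛ R k).right i) • (ℛ R k).left i) • s) • m₀ := by
      intro i _
      rw [hm ((ℛ R k).right i), smul_comm, ← smul_assoc, ← smul_assoc]
    rw [Finset.sum_congr rfl this, ← Finset.sum_smul, ← Finset.sum_smul, hcounit]
  have A : ∀ (m₀ : M), m₀ ∈ Hinvariants R H M → ∀ (s : S) (y : S ⊗[R] H),
      actM y (s • m₀) = (j y s) • m₀ := by
    intro m₀ hm s y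
    induction y using TensorProduct.induction_on with
    | zero => simp
    | tmul t k => rw [actM_tmul, A0 m₀ hm, hj, mul_smul]
    | add y z hy hz => simp [map_add, LinearMap.add_apply, hy, hz, add_smul]
  -- the inverse map
  let P : Fin n → (M →ₗ[R] Hinvariants R H M) := fun k =>
    LinearMap.codRestrict (Hinvariants R H M) (actM (x k)) (hmem k)
  let g : M →ₗ[R] S ⊗[R] Hinvariants R H M :=
    ∑ k, (TensorProduct.mk R S (Hinvariants R H M) (u k)) ∘ₗ P k
  have hg : ∀ m : M, g m = ∑ k, u k ⊗ₜ[R] P k m := by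
    intro m; simp [g, LinearMap.sum_apply]
  have right_inv : ∀ m : M, f (g m) = m := by
    intro m
    rw [hg, map_sum]
    have : ∀ k : Fin n, f (u k ⊗ₜ[R] P k m) = actM (Lu (u k) (x k)) m := by
      intro k
      rw [hf, actLu]
      rfl
    rw [Finset.sum_congr rfl fun k _ => this k, ← LinearMap.sum_apply, ← map_sum, one_elem,
      actM_tmul, one_smul, one_smul]
  have left_inv : ∀ z : S ⊗[R] (Hinvariants R H M), g (f z) = z := by
    intro z
    induction z using TensorProduct.induction_on with
    | zero => simp
    | tmul s m₀ =>
        rw [hf, hg]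
        have hP : ∀ k : Fin n, P k (s • (m₀ : M)) = φ k s • m₀ := by
          intro k
          apply Subtype.ext
          show actM (x k) (s • (m₀ : M)) = ((φ k s • m₀ : Hinvariants R H M) : M)
          rw [A (m₀ : M) m₀.2 s (x k), hjx, SetLike.val_smul, smul_assoc, one_smul]
        calc ∑ k, u k ⊗ₜ[R] P k (s • (m₀ : M)) = ∑ k, (φ k s • u k) ⊗ₜ[R] m₀ := by
              refine Finset.sum_congr rfl fun k _ => ?_
              rw [hP]
              exact (TensorProduct.smul_tmul _ _ _).symm
          _ = s ⊗ₜ[R] m₀ := by rw [← TensorProduct.sum_tmul, hdb]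
    | add y z hy hz => rw [map_add, map_add, hy, hz]
  exact ⟨Function.LeftInverse.injective left_inv, fun m => ⟨g m, right_inv m⟩⟩
end

section
/- Let K be a field and H a finite-dimensional Hopf algebra over K with space of left integrals I = {λ ∈ H : hλ = ε(h)λ for all h ∈ H}. If H is semisimple, then I is not contained in the kernel of the counit ε; equivalently, there exists a left integral λ with ε(λ) = 1. -/
/-- Maschke, one direction.  Let `K` be a field and `H` a
finite-dimensional Hopf algebra over `K`.  If `H` is semisimple, then the space of left
integrals is not contained in the kernel of the counit `ε`; equivalently, there exists a
left integral `λ` with `ε(λ) = 1`. -/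
theorem exists_left_integral_counit_one_of_semisimple
    (K H : Type*) [Field K] [Ring H] [HopfAlgebra K H] [FiniteDimensional K H]
    [IsSemisimpleRing H] :
    ∃ lam : H, (∀ h : H, h * lam = Coalgebra.counit (R := K) h • lam) ∧
      Coalgebra.counit (R := K) lam = 1 := by
  set ε := Bialgebra.counitAlgHom K H with hε
  -- the kernel of the counit, as a left ideal
  let I : Ideal H := RingHom.ker (ε : H →+* K)
  obtain ⟨J, hJ⟩ := exists_isCompl (I : Submodule H H)
  have h1 : (1 : H) ∈ I ⊔ J := by rw [hJ.codisjoint.eq_top]; trivial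
  obtain ⟨x, hx, e, he, hxe⟩ := Submodule.mem_sup.mp h1
  have hεx : ε x = 0 := RingHom.mem_ker.mp hx
  have hεe : ε e = 1 := by
    have := congrArg ε hxe
    simpa [hεx] using this
  refine ⟨e, fun h => ?_, ?_⟩
  · -- h * e - ε h • e lies in I ⊓ J = ⊥
    have hd : h * e - Coalgebra.counit (R := K) h • e = 0 := by
      have hmemJ : h * e - Coalgebra.counit (R := K) h • e ∈ J := by
        have h1 : h * e ∈ J := by simpa [smul_eq_mul] using J.smul_mem h he
        have h2 : Coalgebra.counit (R := K) h • e ∈ J := by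
          rw [algebra_compatible_smul H]
          simpa [smul_eq_mul] using J.smul_mem (algebraMap K H (Coalgebra.counit (R := K) h)) he
        exact J.sub_mem h1 h2
      have hmemI : h * e - Coalgebra.counit (R := K) h • e ∈ I := by
        have : ε (h * e - Coalgebra.counit (R := K) h • e) = 0 := by
          rw [map_sub, map_mul, map_smul, hεe]
          show ε h * 1 - ε h • (1 : K) = 0
          simp
        exact RingHom.mem_ker.mpr this
      have : h * e - Coalgebra.counit (R := K) h • e ∈ (I : Submodule H H) ⊓ J :=
        ⟨hmemI, hmemJ⟩
      rwa [hJ.inf_eq_bot, Submodule.mem_bot] at this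
    exact sub_eq_zero.mp hd
  · exact hεe
end

section
/- Let K be a field, G a finite group, and L/K a finite Galois field extension with Galois group G acting on L. Then the map j : L ⊗_K K[G] → End_K(L) defined by j(a ⊗ g)(x) = a · g(x) is bijective; that is, L is a Hopf-Galois extension of K with Hopf algebra the group algebra K[G]. -/
/-!
By Dedekind's independence of characters the automorphisms `σ ∈ Gal(L/K)`, viewed as
`K`-linear endomorphisms of `L`, are linearly independent over `L`. There are
`|G| = [L : K] = dim_L End_K(L)` of them, so they form an `L`-basis of `End_K(L)`. The map `j`
sends the `L`-basis `1 ⊗ σ` of `L ⊗_K K[G]` to this basis and agrees with the `L`-linear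
equivalence doing so, because both are determined by their values on the `a ⊗ σ`.
-/

open TensorProduct Module

theorem AlgEquiv.linearIndependent_toLinearMap (R A : Type*) [CommSemiring R] [CommRing A]
    [IsDomain A] [Algebra R A] :
    LinearIndependent A (AlgEquiv.toLinearMap : (A ≃ₐ[R] A) → A →ₗ[R] A) := by
  simpa only [Function.comp_def, AlgEquiv.toAlgHom_toLinearMap] using
    (_root_.linearIndependent_toLinearMap R A A).comp _ AlgEquiv.coe_toAlgHom_injective

namespace IsGalois

variable (K L : Type*) [Field K] [Field L] [Algebra K L] [FiniteDimensional K L] [IsGalois K L]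

theorem card_algEquiv_eq_finrank_linearMap :
    Fintype.card (L ≃ₐ[K] L) = finrank L (L →ₗ[K] L) := by
  rw [finrank_linearMap_self, ← card_aut_eq_finrank, Nat.card_eq_fintype_card]

noncomputable def basisAlgEquiv : Basis (L ≃ₐ[K] L) L (L →ₗ[K] L) :=
  basisOfLinearIndependentOfCardEqFinrank (AlgEquiv.linearIndependent_toLinearMap K L)
    (card_algEquiv_eq_finrank_linearMap K L)

@[simp]
theorem coe_basisAlgEquiv : ⇑(basisAlgEquiv K L) = AlgEquiv.toLinearMap :=
  coe_basisOfLinearIndependentOfCardEqFinrank _ _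

noncomputable def tensorGroupAlgebraEquivEnd :
    L ⊗[K] MonoidAlgebra K (L ≃ₐ[K] L) ≃ₗ[L] (L →ₗ[K] L) :=
  (Algebra.TensorProduct.basis L (MonoidAlgebra.basis _ K)).equiv (basisAlgEquiv K L) (.refl _)

theorem tensorGroupAlgebraEquivEnd_tmul_single (a : L) (σ : L ≃ₐ[K] L) (x : L) :
    tensorGroupAlgebraEquivEnd K L (a ⊗ₜ MonoidAlgebra.single σ 1) x = a * σ x := by
  have hbasis : a ⊗ₜ[K] MonoidAlgebra.single σ (1 : K) =
      a • Algebra.TensorProduct.basis L (MonoidAlgebra.basis _ K) σ := by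
    simp [Algebra.TensorProduct.basis_apply, smul_tmul']
  rw [hbasis, map_smul, tensorGroupAlgebraEquivEnd, Basis.equiv_apply]
  simp

end IsGalois

/-- Let `L/K` be a finite Galois extension of fields with Galois group
`G = Gal(L/K)`.  Then the map `j : L ⊗_K K[G] → End_K(L)`, `j(a ⊗ g)(x) = a · g(x)`, is
bijective; that is, `L/K` is a Hopf-Galois extension with Hopf algebra the group algebra
`K[G]`. -/
theorem galois_extension_is_hopf_galois
    (K L : Type*) [Field K] [Field L] [Algebra K L]
    [FiniteDimensional K L] [IsGalois K L]
    (j : L ⊗[K] MonoidAlgebra K (L ≃ₐ[K] L) →ₗ[K] (L →ₗ[K] L))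
    (hj : ∀ (a : L) (σ : L ≃ₐ[K] L) (x : L),
      j (a ⊗ₜ MonoidAlgebra.single σ (1 : K)) x = a * σ x) :
    Function.Bijective j := by
  have hj_eq : j = (IsGalois.tensorGroupAlgebraEquivEnd K L).toLinearMap.restrictScalars K := by
    ext a σ x
    simp [hj, IsGalois.tensorGroupAlgebraEquivEnd_tmul_single]
  rw [hj_eq]
  exact (IsGalois.tensorGroupAlgebraEquivEnd K L).bijective
end

section
/- Let K be a field, G a group, and A = ⊕_{g∈G} A_g a G-graded K-algebra with A_g A_h = A_{gh} for all g,h ∈ G (i.e., A is strongly graded). Let B = A_e. Then the Galois map β : A ⊗_B A → A ⊗_K K[G], defined on homogeneous elements by β(a ⊗ a') = Σ a·a'_g ⊗ g for a' = Σ a'_g, is surjective. -/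
open TensorProduct

/-! Strong grading gives `1 = Σ vᵢ uᵢ` with `vᵢ ∈ A_{g⁻¹}` and `uᵢ ∈ A_g`, so
`a ⊗ g = Σ (a vᵢ) uᵢ ⊗ g = β (Σ a vᵢ ⊗ uᵢ)` lies in the range of `β` for every `a ∈ A` and
`g ∈ G`; these elements span `A ⊗ K[G]`. -/

theorem tmul_mem_range_of_one_mem_mul {R A M : Type*} [CommSemiring R] [Semiring A]
    [Algebra R A] [AddCommMonoid M] [Module R M] (β : A ⊗[R] A →ₗ[R] A ⊗[R] M)
    {P N : Submodule R A} {t : M} (hβ : ∀ a, ∀ u ∈ N, β (a ⊗ₜ u) = (a * u) ⊗ₜ t)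
    (hone : (1 : A) ∈ P * N) (a : A) : a ⊗ₜ t ∈ LinearMap.range β := by
  have hmul : ∀ r ∈ P * N, (a * r) ⊗ₜ t ∈ LinearMap.range β := fun r hr ↦ by
    induction hr using Submodule.mul_induction_on' with
    | mem_mul_mem v _ u hu => exact ⟨(a * v) ⊗ₜ u, by rw [hβ _ _ hu, mul_assoc]⟩
    | add x _ y _ hx hy => simpa only [mul_add, add_tmul] using add_mem hx hy
  simpa using hmul 1 hone

theorem MonoidAlgebra.surjective_of_tmul_single_one_mem_range {R A G M : Type*}
    [CommSemiring R] [AddCommMonoid A] [Module R A] [AddCommMonoid M] [Module R M]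
    (f : M →ₗ[R] A ⊗[R] MonoidAlgebra R G)
    (h : ∀ a g, a ⊗ₜ MonoidAlgebra.single g (1 : R) ∈ LinearMap.range f) :
    Function.Surjective f := by
  rw [← LinearMap.range_eq_top, eq_top_iff, ← span_tmul_eq_top, Submodule.span_le]
  rintro _ ⟨a, x, rfl⟩
  rw [SetLike.mem_coe]
  induction x using MonoidAlgebra.induction_linear with
  | zero => simp
  | add x y hx hy => simpa only [tmul_add] using add_mem hx hy
  | single g r =>
    rw [← mul_one r, ← MonoidAlgebra.smul_single', tmul_smul]
    exact Submodule.smul_mem _ r (h a g)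

theorem strongly_graded_galois_map_surjective_general
    (K G A : Type*) [Field K] [Group G] [Ring A] [Algebra K A]
    (𝒜 : G → Submodule K A)
    (hone : (1 : A) ∈ 𝒜 1)
    (hstrong : ∀ g h : G, 𝒜 g * 𝒜 h = 𝒜 (g * h))
    (β : A ⊗[K] A →ₗ[K] A ⊗[K] MonoidAlgebra K G)
    (hβ : ∀ (a a' : A) (g : G), a' ∈ 𝒜 g →
      β (a ⊗ₜ a') = (a * a') ⊗ₜ MonoidAlgebra.single g (1 : K)) :
    Function.Surjective β :=
  MonoidAlgebra.surjective_of_tmul_single_one_mem_range β fun a g ↦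
    tmul_mem_range_of_one_mem_mul β (P := 𝒜 g⁻¹) (hβ · · g)
      (by rwa [hstrong, inv_mul_cancel]) a

/-- Let `K` be a field, `G` a group and `A = ⊕_{g ∈ G} A_g` a
strongly `G`-graded `K`-algebra (`A_g A_h = A_{gh}` for all `g, h`), with identity
component `B = A_e`.  Then the Galois map `β : A ⊗_B A → A ⊗_K K[G]`,
`β(a ⊗ a') = Σ_g a·a'_g ⊗ g`, is surjective.  (Since `A ⊗_B A` is a quotient of
`A ⊗_K A`, this is equivalent to the surjectivity of the induced map on `A ⊗_K A`,
which is how the map is formalized here.) -/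
theorem strongly_graded_galois_map_surjective
    (K G A : Type*) [Field K] [Group G] [DecidableEq G] [Ring A] [Algebra K A]
    (𝒜 : G → Submodule K A)
    (hdecomp : DirectSum.IsInternal 𝒜)
    (hone : (1 : A) ∈ 𝒜 1)
    (hstrong : ∀ g h : G, 𝒜 g * 𝒜 h = 𝒜 (g * h))
    (β : A ⊗[K] A →ₗ[K] A ⊗[K] MonoidAlgebra K G)
    (hβ : ∀ (a a' : A) (g : G), a' ∈ 𝒜 g →
      β (a ⊗ₜ a') = (a * a') ⊗ₜ MonoidAlgebra.single g (1 : K)) :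
    Function.Surjective β :=
  strongly_graded_galois_map_surjective_general K G A 𝒜 hone hstrong β hβ
end

section
/- Let R be a commutative ring, H a finite projective cocommutative R-Hopf algebra, and S a finite commutative R-algebra which is a left H-module algebra. Then the map j : S ⊗_R H → End_R(S), j(s ⊗ h)(t) = s·(h·t), is an isomorphism if and only if the map γ : S ⊗_R S → S ⊗_R H*, γ(s ⊗ t) = (s ⊗ 1)σ(t), is an isomorphism, where σ : S → S ⊗_R H* is the comodule structure corresponding to the H-action. -/
open TensorProduct Coalgebra

section Aux

variable {R S : Type*} [CommRing R] [CommRing S] [Algebra R S]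

/-- The canonical `S`-linear equivalence `Hom_R(M, S) ≃ Hom_S(S ⊗_R M, S)`. -/
noncomputable def thetaAux (M : Type*) [AddCommGroup M] [Module R M] :
    (M →ₗ[R] S) ≃ₗ[S] Module.Dual S (S ⊗[R] M) :=
  LinearMap.liftBaseChangeEquiv S

@[simp] lemma thetaAux_apply (M : Type*) [AddCommGroup M] [Module R M]
    (g : M →ₗ[R] S) (s : S) (m : M) :
    thetaAux (R := R) M g (s ⊗ₜ m) = s • g m := rfl

/-- The canonical `S`-linear equivalence `S ⊗_R M ≃ Hom_S(Hom_R(M, S), S)`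
for `M` finite projective over `R`. -/
noncomputable def phiAux (M : Type*) [AddCommGroup M] [Module R M]
    [Module.Finite R M] [Module.Projective R M] :
    (S ⊗[R] M) ≃ₗ[S] ((M →ₗ[R] S) →ₗ[S] S) :=
  (Module.evalEquiv S (S ⊗[R] M)).trans
    ((thetaAux (R := R) (S := S) M).symm.arrowCongr (LinearEquiv.refl S S))

@[simp] lemma phiAux_apply (M : Type*) [AddCommGroup M] [Module R M]
    [Module.Finite R M] [Module.Projective R M]
    (x : S ⊗[R] M) (g : M →ₗ[R] S) :
    phiAux (R := R) M x g = thetaAux (R := R) M g x := by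
  simp [phiAux, LinearEquiv.arrowCongr, Module.Dual.eval]

/-- If `g` is, up to isomorphisms, the dual of `f`, and `f` is bijective,
then `g` is bijective. -/
lemma bij_of_dual_square {S A B A' B' : Type*} [CommRing S]
    [AddCommGroup A] [Module S A] [AddCommGroup B] [Module S B]
    [AddCommGroup A'] [Module S A'] [AddCommGroup B'] [Module S B']
    (f : A →ₗ[S] B) (g : A' →ₗ[S] B')
    (α : A' ≃ₗ[S] Module.Dual S B) (β : B' ≃ₗ[S] Module.Dual S A)
    (hsq : ∀ a', β (g a') = (α a').comp f)
    (hf : Function.Bijective f) : Function.Bijective g := by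
  let e : A ≃ₗ[S] B := LinearEquiv.ofBijective f hf
  have hg : ∀ a', g a' = β.symm (e.dualMap (α a')) := by
    intro a'
    apply β.injective
    rw [β.apply_symm_apply, hsq]
    rfl
  have : (g : A' → B') = β.symm ∘ e.dualMap ∘ α := funext hg
  rw [this]
  exact β.symm.bijective.comp (e.dualMap.bijective.comp α.bijective)

end Aux

/-- Let `R` be a commutative ring, `H` a finite projective
cocommutative `R`-Hopf algebra and `S` a finite commutative `R`-algebra that is a left
`H`-module algebra.  Then `j : S ⊗_R H → End_R(S)`, `j(s ⊗ h)(t) = s·(h•t)`, is an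
isomorphism if and only if the Galois map
`γ : S ⊗_R S → S ⊗_R H* ≅ Hom_R(H, S)`, `γ(s ⊗ t) = (s ⊗ 1)σ(t)`, i.e.
`γ(s ⊗ t)(h) = s·(h•t)` (where `σ` is the `H*`-comodule structure corresponding to the
`H`-action, and we use the canonical identification `S ⊗_R H* ≅ Hom_R(H, S)` for
finite projective `H`), is an isomorphism. -/
theorem smash_iso_iff_galois_iso
    (R H S : Type*) [CommRing R] [Ring H] [HopfAlgebra R H]
    [Module.Finite R H] [Module.Projective R H]
    -- `H` is cocommutative:
    (hcocomm : ∀ h : H, (TensorProduct.comm R H H) (Coalgebra.comul (R := R) h) =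
      Coalgebra.comul (R := R) h)
    [CommRing S] [Algebra R S] [Module.Finite R S] [Module.Projective R S]
    -- `S` is a left `H`-module algebra:
    [Module H S] [IsScalarTower R H S] [SMulCommClass H R S]
    (hSalg : ∀ (h : H) (s t : S), h • (s * t) =
      ∑ i ∈ (ℛ R h).index, ((ℛ R h).left i • s) * ((ℛ R h).right i • t))
    (hSone : ∀ h : H, h • (1 : S) = Coalgebra.counit (R := R) h • (1 : S))
    (j : S ⊗[R] H →ₗ[R] Module.End R S)
    (hj : ∀ (s : S) (h : H) (t : S), j (s ⊗ₜ h) t = s * (h • t))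
    (γ : S ⊗[R] S →ₗ[R] (H →ₗ[R] S))
    (hγ : ∀ (s t : S) (h : H), γ (s ⊗ₜ t) h = s * (h • t)) :
    Function.Bijective j ↔ Function.Bijective γ := by
  -- upgrade `j` to an `S`-linear map
  have jsmul : ∀ (s : S) (x : S ⊗[R] H), j (s • x) = s • j x := by
    intro s x
    induction x using TensorProduct.induction_on with
    | zero => simp
    | tmul u h =>
        ext t
        rw [smul_tmul']
        simp only [smul_eq_mul, LinearMap.smul_apply, hj]
        ring
    | add x y hx hy => simp [smul_add, hx, hy]
  let jS : S ⊗[R] H →ₗ[S] Module.End R S :=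
    { toFun := j, map_add' := fun x y => j.map_add x y, map_smul' := jsmul }
  -- upgrade `γ` to an `S`-linear map
  have γsmul : ∀ (s : S) (x : S ⊗[R] S), γ (s • x) = s • γ x := by
    intro s x
    induction x using TensorProduct.induction_on with
    | zero => simp
    | tmul u t =>
        ext h
        rw [smul_tmul']
        simp only [smul_eq_mul, LinearMap.smul_apply, hγ]
        ring
    | add x y hx hy => simp [smul_add, hx, hy]
  let γS : S ⊗[R] S →ₗ[S] (H →ₗ[R] S) :=
    { toFun := γ, map_add' := fun x y => γ.map_add x y, map_smul' := γsmul }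
  have hjS : Function.Bijective j ↔ Function.Bijective jS := Iff.rfl
  have hγS : Function.Bijective γ ↔ Function.Bijective γS := Iff.rfl
  rw [hjS, hγS]
  constructor
  · intro hbij
    refine bij_of_dual_square jS γS (phiAux (R := R) S) (thetaAux (R := R) H) ?_ hbij
    intro x
    induction x using TensorProduct.induction_on with
    | zero => rw [map_zero, map_zero, map_zero, LinearMap.zero_comp]
    | tmul s t =>
        refine LinearMap.ext fun z => ?_
        induction z using TensorProduct.induction_on with
        | zero => simp
        | tmul u h =>
            simp only [LinearMap.coe_comp, Function.comp_apply]
            show thetaAux (R := R) H (γ (s ⊗ₜ t)) (u ⊗ₜ h) =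
              phiAux (R := R) S (s ⊗ₜ t) (j (u ⊗ₜ h))
            rw [thetaAux_apply, phiAux_apply, thetaAux_apply, hγ, hj]
            simp only [smul_eq_mul]
            ring
        | add z w hz hw => simp [map_add, hz, hw]
    | add x y hx hy =>
        rw [map_add, map_add, map_add, hx, hy, LinearMap.add_comp]
  · intro hbij
    refine bij_of_dual_square γS jS (phiAux (R := R) H) (thetaAux (R := R) S) ?_ hbij
    intro x
    induction x using TensorProduct.induction_on with
    | zero => rw [map_zero, map_zero, map_zero, LinearMap.zero_comp]
    | tmul s h =>
        refine LinearMap.ext fun z => ?_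
        induction z using TensorProduct.induction_on with
        | zero => simp
        | tmul u t =>
            simp only [LinearMap.coe_comp, Function.comp_apply]
            show thetaAux (R := R) S (j (s ⊗ₜ h)) (u ⊗ₜ t) =
              phiAux (R := R) H (s ⊗ₜ h) (γ (u ⊗ₜ t))
            rw [thetaAux_apply, phiAux_apply, thetaAux_apply, hγ, hj]
            simp only [smul_eq_mul]
            ring
        | add z w hz hw => simp [map_add, hz, hw]
    | add x y hx hy =>
        rw [map_add, map_add, map_add, hx, hy, LinearMap.add_comp]
end
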